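/- There exists an absolute constant $C>0$ such that the following holds. Let $\lambda\ge1$, $M\ge1$, $N\ge1$, and let $I_1,I_2\subseteq[-10M,10M]$ be intervals such that $|\kappa_1-\kappa_2|\ge M$ for all $\kappa_1\in I_1$ and $\kappa_2\in I_2$. For $j=1,2$ let $a_j:\mathbb{Z}\to\mathbb{C}$ be finitely supported with $a_j(n)=0$ unless $n/\lambda\in I_j$, and set $u_j(t,x)=\sum_{n\in\mathbb{Z}}a_j(n)\,e^{i(nx/\lambda-n^2t/\lambda^2)}$. Then $\int_0^{\lambda/N}\int_0^{2\pi\lambda}|u_1(t,x)\,u_2(t,x)|^2\,dx\,dt\;\le\;C\Big(\frac{1}{M}+\frac{1}{N}\Big)\Big(\int_0^{2\pi\lambda}|u_1(0,x)|^2dx\Big)\Big(\int_0^{2\pi\lambda}|u_2(0,x)|^2dx\Big)$. -/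

import Mathlib

open MeasureTheory Real intervalIntegral

noncomputable section BilinAux

/-- trapezoid weight -/
def wfn (T s t : ℝ) : ℝ := max 0 (min 1 (min ((t+s)/s) ((T+s-t)/s)))

/-- spatial character -/
def Efn (lam : ℝ) (K : ℤ) (x : ℝ) : ℂ := Complex.exp ((Complex.I * (K:ℂ) / (lam:ℂ)) * (x:ℂ))

/-- temporal character -/
def Tfn (θ t : ℝ) : ℂ := Complex.exp (Complex.I * (θ:ℂ) * (t:ℂ))

/-- weighted time Fourier coefficient -/
def Wint (T s θ : ℝ) : ℂ := ∫ t in (-s:ℝ)..(T+s), (wfn T s t : ℂ) * Tfn θ t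

lemma Efn_cont (lam : ℝ) (K : ℤ) : Continuous (Efn lam K) := by unfold Efn; fun_prop

lemma Tfn_cont (θ : ℝ) : Continuous (Tfn θ) := by unfold Tfn; fun_prop

lemma Tfn_mul (a b t : ℝ) : Tfn a t * Tfn b t = Tfn (a+b) t := by
  unfold Tfn; rw [← Complex.exp_add]; congr 1; push_cast; ring

lemma conj_Tfn (θ t : ℝ) : (starRingEnd ℂ) (Tfn θ t) = Tfn (-θ) t := by
  unfold Tfn
  rw [← Complex.exp_conj]
  congr 1
  simp [map_mul, Complex.conj_I, Complex.conj_ofReal]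

lemma Efn_mul (lam : ℝ) (K K' : ℤ) (x : ℝ) :
    Efn lam K x * Efn lam K' x = Efn lam (K+K') x := by
  unfold Efn; rw [← Complex.exp_add]; congr 1; push_cast; ring

lemma conj_Efn (lam : ℝ) (K : ℤ) (x : ℝ) :
    (starRingEnd ℂ) (Efn lam K x) = Efn lam (-K) x := by
  unfold Efn
  rw [← Complex.exp_conj]
  congr 1
  simp [map_mul, map_div₀, Complex.conj_I, Complex.conj_ofReal]

lemma int_Efn (lam : ℝ) (hlam : lam ≠ 0) (K : ℤ) :
    (∫ x in (0:ℝ)..(2*π*lam), Efn lam K x)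
      = if K = 0 then ((2*π*lam : ℝ) : ℂ) else 0 := by
  unfold Efn
  rcases eq_or_ne K 0 with h | h
  · simp [h]
  · have hc : Complex.I * K / lam ≠ 0 := by
      simp [Complex.ext_iff, div_eq_zero_iff, Complex.I_ne_zero, h,
        Complex.ofReal_eq_zero, hlam]
    rw [integral_exp_mul_complex hc, if_neg h]
    have h1 : (Complex.I * K / lam) * ((2*π*lam : ℝ) : ℂ) = K * (2 * π * Complex.I) := by
      have : (lam : ℂ) ≠ 0 := Complex.ofReal_ne_zero.mpr hlam
      field_simp
      push_cast
      ring
    rw [h1, Complex.exp_int_mul_two_pi_mul_I]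
    simp

lemma hasDeriv_exp_real (z : ℂ) (t : ℝ) :
    HasDerivAt (fun t : ℝ => Complex.exp (z*t)) (z * Complex.exp (z*t)) t := by
  have h1 : HasDerivAt (fun y : ℂ => Complex.exp (z*y)) (z * Complex.exp (z*t)) (t : ℂ) := by
    simpa [mul_comm, Function.comp_def] using ((Complex.hasDerivAt_exp (z * t)).comp (t:ℂ)
      (by simpa using (hasDerivAt_id (t:ℂ)).const_mul z))
  exact h1.comp_ofReal

lemma hasDeriv_aff_exp (a b z : ℂ) (hz : z ≠ 0) (t : ℝ) :
    HasDerivAt (fun t : ℝ => ((a + b*t)/z - b/z^2) * Complex.exp (z*t))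
      ((a + b*t) * Complex.exp (z*t)) t := by
  have he := hasDeriv_exp_real z t
  have hl : HasDerivAt (fun t : ℝ => ((a + b*t)/z - b/z^2)) (b/z) t := by
    have : HasDerivAt (fun t : ℝ => a + b*(t:ℂ)) b t := by
      simpa using ((Complex.ofRealCLM.hasDerivAt (x := t)).const_mul b).const_add a
    simpa using (this.div_const z).sub_const (b/z^2)
  have := hl.mul he
  refine this.congr_deriv ?_
  field_simp
  ring

lemma int_aff_exp (a b z : ℂ) (hz : z ≠ 0) (t₁ t₂ : ℝ) :
    (∫ t in t₁..t₂, (a + b*t) * Complex.exp (z*t))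
      = ((a + b*t₂)/z - b/z^2) * Complex.exp (z*t₂)
        - ((a + b*t₁)/z - b/z^2) * Complex.exp (z*t₁) := by
  refine integral_eq_sub_of_hasDerivAt (fun t _ => hasDeriv_aff_exp a b z hz t) ?_
  apply Continuous.intervalIntegrable
  fun_prop

lemma wfn_cont (T s : ℝ) : Continuous (wfn T s) := by unfold wfn; fun_prop

lemma wfn_nonneg (T s t : ℝ) : 0 ≤ wfn T s t := le_max_left _ _

lemma wfn_le_one (T s t : ℝ) : wfn T s t ≤ 1 := by
  unfold wfn
  exact max_le (by norm_num) (min_le_left _ _)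

lemma wfn_one (T s t : ℝ) (hs : 0 < s) (h0 : 0 ≤ t) (hT : t ≤ T) : wfn T s t = 1 := by
  unfold wfn
  rw [min_eq_left, max_eq_right zero_le_one]
  exact le_min (by rw [le_div_iff₀ hs]; linarith) (by rw [le_div_iff₀ hs]; linarith)

lemma wfn_left (T s t : ℝ) (hs : 0 < s) (hT : 0 ≤ T) (h1 : -s ≤ t) (h2 : t ≤ 0) :
    wfn T s t = (t+s)/s := by
  unfold wfn
  have h3 : (t+s)/s ≤ (T+s-t)/s := by
    gcongr
    linarith
  have h4 : (t+s)/s ≤ 1 := by rw [div_le_one hs]; linarith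
  have h5 : 0 ≤ (t+s)/s := by
    apply div_nonneg (by linarith) hs.le
  rw [min_eq_left h3, min_eq_right h4, max_eq_right h5]

lemma wfn_right (T s t : ℝ) (hs : 0 < s) (hT : 0 ≤ T) (h1 : T ≤ t) (h2 : t ≤ T+s) :
    wfn T s t = (T+s-t)/s := by
  unfold wfn
  have h3 : (T+s-t)/s ≤ (t+s)/s := by
    gcongr
    linarith
  have h4 : (T+s-t)/s ≤ 1 := by rw [div_le_one hs]; linarith
  have h5 : 0 ≤ (T+s-t)/s := by
    apply div_nonneg (by linarith) hs.le
  rw [min_eq_right h3, min_eq_right h4, max_eq_right h5]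

lemma wfn_intable (T s : ℝ) (z : ℂ) (t₁ t₂ : ℝ) :
    IntervalIntegrable (fun t : ℝ => (wfn T s t : ℂ) * Complex.exp (z*t)) volume t₁ t₂ := by
  apply Continuous.intervalIntegrable
  exact (Complex.continuous_ofReal.comp (wfn_cont T s)).mul (by fun_prop)

lemma what_eq (T s : ℝ) (hT : 0 ≤ T) (hs : 0 < s) (z : ℂ) (hz : z ≠ 0) :
    (∫ t in (-s:ℝ)..(T+s), (wfn T s t : ℂ) * Complex.exp (z*t))
      = (Complex.exp (z*((-s:ℝ):ℂ)) - 1 + Complex.exp (z*((T+s:ℝ):ℂ))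
          - Complex.exp (z*((T:ℝ):ℂ))) / ((s:ℂ)*z^2) := by
  have hsC : (s:ℂ) ≠ 0 := Complex.ofReal_ne_zero.mpr hs.ne'
  have split1 : (∫ t in (-s:ℝ)..(T+s), (wfn T s t : ℂ) * Complex.exp (z*t))
      = (∫ t in (-s:ℝ)..(0:ℝ), (wfn T s t : ℂ) * Complex.exp (z*t))
        + (∫ t in (0:ℝ)..T, (wfn T s t : ℂ) * Complex.exp (z*t))
        + (∫ t in T..(T+s), (wfn T s t : ℂ) * Complex.exp (z*t)) := by
    rw [integral_add_adjacent_intervals (wfn_intable ..) (wfn_intable ..),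
      integral_add_adjacent_intervals (wfn_intable ..) (wfn_intable ..)]
  have e1 : (∫ t in (-s:ℝ)..(0:ℝ), (wfn T s t : ℂ) * Complex.exp (z*t))
      = ∫ t in (-s:ℝ)..(0:ℝ), ((1 : ℂ) + (1/(s:ℂ))*t) * Complex.exp (z*t) := by
    apply integral_congr
    intro t ht
    rw [Set.uIcc_of_le (by linarith)] at ht
    simp only
    rw [wfn_left T s t hs hT ht.1 ht.2]
    push_cast
    field_simp
    ring
  have e2 : (∫ t in (0:ℝ)..T, (wfn T s t : ℂ) * Complex.exp (z*t))
      = ∫ t in (0:ℝ)..T, ((1 : ℂ) + (0:ℂ)*t) * Complex.exp (z*t) := by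
    apply integral_congr
    intro t ht
    rw [Set.uIcc_of_le (by linarith)] at ht
    simp only
    rw [wfn_one T s t hs ht.1 ht.2]
    simp
  have e3 : (∫ t in T..(T+s), (wfn T s t : ℂ) * Complex.exp (z*t))
      = ∫ t in T..(T+s), ((((T+s)/s : ℝ):ℂ) + (-(1/(s:ℂ)))*t) * Complex.exp (z*t) := by
    apply integral_congr
    intro t ht
    rw [Set.uIcc_of_le (by linarith)] at ht
    simp only
    rw [wfn_right T s t hs hT ht.1 ht.2]
    push_cast
    field_simp
    ring
  rw [split1, e1, e2, e3, int_aff_exp _ _ _ hz, int_aff_exp _ _ _ hz, int_aff_exp _ _ _ hz,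
    eq_div_iff (by simp [hsC, hz] : (s:ℂ)*z^2 ≠ 0)]
  push_cast
  field_simp [hz, hsC]
  ring_nf
  field_simp [hz, hsC]
  rw [Complex.exp_zero]

lemma norm_exp_I_mul (r : ℝ) : ‖Complex.exp (Complex.I*(r:ℂ))‖ = 1 := by
  simp [Complex.norm_exp]

lemma norm_exp_I_theta (θ r : ℝ) : ‖Complex.exp ((Complex.I*(θ:ℂ))*(r:ℂ))‖ = 1 := by
  rw [mul_assoc, ← Complex.ofReal_mul]; exact norm_exp_I_mul _

lemma Wint_bound_zero (T s : ℝ) (hT : 0 ≤ T) (hs : 0 < s) (θ : ℝ) :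
    ‖Wint T s θ‖ ≤ T + 2*s := by
  unfold Wint Tfn
  have h := intervalIntegral.norm_integral_le_of_norm_le_const (C := 1)
    (f := fun t : ℝ => (wfn T s t : ℂ) * Complex.exp (Complex.I*(θ:ℂ)*t))
    (a := -s) (b := T+s) ?_
  · calc ‖_‖ ≤ 1 * |T + s - (-s)| := h
      _ ≤ T + 2*s := by
          rw [one_mul, abs_of_nonneg (by linarith)]
          linarith
  · intro t _
    rw [norm_mul]
    have h1 : ‖((wfn T s t : ℝ) : ℂ)‖ ≤ 1 := by
      rw [Complex.norm_real, Real.norm_eq_abs, abs_of_nonneg (wfn_nonneg T s t)]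
      exact wfn_le_one T s t
    have h2 : ‖Complex.exp (Complex.I*(θ:ℂ)*t)‖ = 1 := by
      rw [mul_assoc, ← Complex.ofReal_mul]
      exact norm_exp_I_mul _
    rw [h2, mul_one]
    exact h1

lemma Wint_bound_ne (T s : ℝ) (hT : 0 ≤ T) (hs : 0 < s) (θ : ℝ) (hθ : θ ≠ 0) :
    ‖Wint T s θ‖ ≤ 4/(s*θ^2) := by
  unfold Wint Tfn
  have hz : (Complex.I*(θ:ℂ)) ≠ 0 := by
    simp [Complex.I_ne_zero, Complex.ofReal_eq_zero, hθ]
  have he : (∫ t in (-s:ℝ)..(T+s), (wfn T s t : ℂ) * Complex.exp (Complex.I*(θ:ℂ)*t))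
      = ∫ t in (-s:ℝ)..(T+s), (wfn T s t : ℂ) * Complex.exp ((Complex.I*(θ:ℂ))*t) := rfl
  rw [he, what_eq T s hT hs _ hz, norm_div]
  have hden : ‖(s:ℂ)*(Complex.I*(θ:ℂ))^2‖ = s*θ^2 := by
    rw [norm_mul, norm_pow, norm_mul]
    simp [Complex.norm_real, abs_of_pos hs, sq_abs]
  rw [hden]
  have hnum : ‖Complex.exp ((Complex.I*(θ:ℂ))*((-s:ℝ):ℂ)) - 1
      + Complex.exp ((Complex.I*(θ:ℂ))*((T+s:ℝ):ℂ))
      - Complex.exp ((Complex.I*(θ:ℂ))*((T:ℝ):ℂ))‖ ≤ 4 := by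
    calc ‖_ - 1 + _ - _‖ ≤ ‖Complex.exp ((Complex.I*(θ:ℂ))*((-s:ℝ):ℂ)) - 1
          + Complex.exp ((Complex.I*(θ:ℂ))*((T+s:ℝ):ℂ))‖
          + ‖Complex.exp ((Complex.I*(θ:ℂ))*((T:ℝ):ℂ))‖ := norm_sub_le _ _
      _ ≤ (‖Complex.exp ((Complex.I*(θ:ℂ))*((-s:ℝ):ℂ)) - 1‖
          + ‖Complex.exp ((Complex.I*(θ:ℂ))*((T+s:ℝ):ℂ))‖)
          + ‖Complex.exp ((Complex.I*(θ:ℂ))*((T:ℝ):ℂ))‖ := by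
            gcongr
            exact norm_add_le _ _
      _ ≤ ((‖Complex.exp ((Complex.I*(θ:ℂ))*((-s:ℝ):ℂ))‖ + ‖(1:ℂ)‖)
          + ‖Complex.exp ((Complex.I*(θ:ℂ))*((T+s:ℝ):ℂ))‖)
          + ‖Complex.exp ((Complex.I*(θ:ℂ))*((T:ℝ):ℂ))‖ := by
            gcongr
            exact norm_sub_le _ _
      _ ≤ 4 := by
          rw [norm_exp_I_theta, norm_exp_I_theta, norm_exp_I_theta, norm_one]
          norm_num
  have hpos : (0:ℝ) < s*θ^2 := by positivity
  gcongr

lemma basel_aux : ∀ J : ℕ, ∑ j ∈ Finset.Icc 1 J, (1:ℝ)/(j:ℝ)^2 ≤ 2 - 1/(max J 1) := by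
  intro J
  induction J with
  | zero => simp
  | succ n ih =>
    rw [Finset.sum_Icc_succ_top (by omega : 1 ≤ n + 1)]
    rcases Nat.eq_zero_or_pos n with h | h
    · subst h; norm_num
    · have hn1 : max n 1 = n := by omega
      have hn2 : max (n+1) 1 = n + 1 := by omega
      rw [hn1] at ih
      rw [hn2]
      have hx : (1:ℝ) ≤ (n:ℝ) := by exact_mod_cast h
      have h1 : (1:ℝ)/((n:ℝ)+1)^2 ≤ 1/(n:ℝ) - 1/((n:ℝ)+1) := by
        rw [div_sub_div _ _ (by linarith) (by linarith)]
        rw [div_le_div_iff₀ (by positivity) (by positivity)]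
        ring_nf
        nlinarith
      push_cast
      linarith

lemma sum_inv_sq_int (D : Finset ℤ) (hD : ∀ d ∈ D, d ≠ 0) :
    ∑ d ∈ D, (1:ℝ)/(d:ℝ)^2 ≤ 4 := by
  classical
  set J := D.sup (fun d => d.natAbs) with hJ
  set f : ℕ → ℝ := fun j => (1:ℝ)/(j:ℝ)^2 with hf
  have key : ∑ d ∈ D, (1:ℝ)/(d:ℝ)^2 = ∑ d ∈ D, f d.natAbs := by
    apply Finset.sum_congr rfl
    intro d _
    rw [hf]
    simp only
    congr 1
    simp [Nat.cast_natAbs, sq_abs]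
  rw [key, Finset.sum_comp (s := D) f (fun d => d.natAbs)]
  have hsub : D.image (fun d => d.natAbs) ⊆ Finset.Icc 1 J := by
    intro j hj
    simp only [Finset.mem_image] at hj
    obtain ⟨d, hd, rfl⟩ := hj
    exact Finset.mem_Icc.mpr ⟨Nat.one_le_iff_ne_zero.mpr (by simpa using hD d hd),
      Finset.le_sup hd⟩
  have step1 : ∑ j ∈ D.image (fun d => d.natAbs),
      ((D.filter fun d => d.natAbs = j).card) • f j
      ≤ ∑ j ∈ D.image (fun d => d.natAbs), 2 * f j := by
    apply Finset.sum_le_sum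
    intro j _
    rw [nsmul_eq_mul]
    have hcard : (D.filter fun d => d.natAbs = j).card ≤ 2 := by
      have : (D.filter fun d => d.natAbs = j) ⊆ {(j:ℤ), -(j:ℤ)} := by
        intro d hd
        simp only [Finset.mem_filter] at hd
        have := hd.2
        simp only [Finset.mem_insert, Finset.mem_singleton]
        omega
      calc (D.filter fun d => d.natAbs = j).card ≤ _ := Finset.card_le_card this
        _ ≤ 2 := Finset.card_insert_le _ _ |>.trans (by simp)
    have h2 : ((D.filter fun d => d.natAbs = j).card : ℝ) ≤ 2 := by exact_mod_cast hcard
    have h3 : 0 ≤ f j := by rw [hf]; positivity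
    exact mul_le_mul_of_nonneg_right h2 h3
  refine step1.trans ?_
  have step2 : ∑ j ∈ D.image (fun d => d.natAbs), 2 * f j
      ≤ ∑ j ∈ Finset.Icc 1 J, 2 * f j := by
    apply Finset.sum_le_sum_of_subset_of_nonneg hsub
    intro j _ _
    rw [hf]
    positivity
  refine step2.trans ?_
  rw [← Finset.mul_sum]
  have := basel_aux J
  have h2 : (0:ℝ) < 1/(max J 1) := by positivity
  rw [hf]
  simp only
  linarith

end BilinAux

open Complex in
lemma x_expand {ι : Type} [DecidableEq ι] (lam : ℝ) (hlam : 0 < lam) (S : Finset ι)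
    (c : ι → ℂ) (K : ι → ℤ) :
    ((∫ x in (0:ℝ)..(2*π*lam), ‖∑ i ∈ S, c i * Efn lam (K i) x‖^2 : ℝ) : ℂ)
      = ∑ i ∈ S, ∑ j ∈ S, c i * (starRingEnd ℂ) (c j)
          * (if K i = K j then ((2*π*lam:ℝ):ℂ) else 0) := by
  classical
  have hpt : ∀ x : ℝ, ((‖∑ i ∈ S, c i * Efn lam (K i) x‖^2 : ℝ) : ℂ)
      = ∑ i ∈ S, ∑ j ∈ S, (c i * (starRingEnd ℂ) (c j)) * Efn lam (K i - K j) x := by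
    intro x
    set F := ∑ i ∈ S, c i * Efn lam (K i) x with hF
    have h1 : ((‖F‖^2 : ℝ) : ℂ) = F * (starRingEnd ℂ) F := by
      rw [Complex.mul_conj, Complex.normSq_eq_norm_sq]
    rw [h1, hF, map_sum, Finset.sum_mul_sum]
    apply Finset.sum_congr rfl
    intro i _
    apply Finset.sum_congr rfl
    intro j _
    rw [map_mul, conj_Efn]
    rw [show c i * Efn lam (K i) x * ((starRingEnd ℂ) (c j) * Efn lam (-(K j)) x)
        = (c i * (starRingEnd ℂ) (c j)) * (Efn lam (K i) x * Efn lam (-(K j)) x) by ring,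
      Efn_mul]
    norm_num [sub_eq_add_neg]
  have hint : ∀ (i : ι), IntervalIntegrable
      (fun x => ∑ j ∈ S, (c i * (starRingEnd ℂ) (c j)) * Efn lam (K i - K j) x)
      volume 0 (2*π*lam) := by
    intro i
    apply Continuous.intervalIntegrable
    exact continuous_finset_sum _ fun j _ => continuous_const.mul (Efn_cont lam _)
  calc ((∫ x in (0:ℝ)..(2*π*lam), ‖∑ i ∈ S, c i * Efn lam (K i) x‖^2 : ℝ) : ℂ)
      = ∫ x in (0:ℝ)..(2*π*lam),
          ∑ i ∈ S, ∑ j ∈ S, (c i * (starRingEnd ℂ) (c j)) * Efn lam (K i - K j) x := by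
        rw [← intervalIntegral.integral_ofReal]
        exact intervalIntegral.integral_congr (fun x _ => hpt x)
    _ = ∑ i ∈ S, ∫ x in (0:ℝ)..(2*π*lam),
          ∑ j ∈ S, (c i * (starRingEnd ℂ) (c j)) * Efn lam (K i - K j) x := by
        exact intervalIntegral.integral_finset_sum (fun i _ => hint i)
    _ = ∑ i ∈ S, ∑ j ∈ S, ∫ x in (0:ℝ)..(2*π*lam),
          (c i * (starRingEnd ℂ) (c j)) * Efn lam (K i - K j) x := by
        apply Finset.sum_congr rfl
        intro i _
        exact intervalIntegral.integral_finset_sum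
          (fun j _ => (continuous_const.mul (Efn_cont lam _)).intervalIntegrable _ _)
    _ = ∑ i ∈ S, ∑ j ∈ S, c i * (starRingEnd ℂ) (c j)
          * (if K i = K j then ((2*π*lam:ℝ):ℂ) else 0) := by
        apply Finset.sum_congr rfl
        intro i _
        apply Finset.sum_congr rfl
        intro j _
        rw [intervalIntegral.integral_const_mul, int_Efn lam hlam.ne' _]
        congr 1
        simp [sub_eq_zero]

lemma row_sum_le (S : Finset (ℤ×ℤ)) (r : ℤ×ℤ) :
    ∑ p ∈ S.erase r, (if p.1+p.2 = r.1+r.2 then (1:ℝ)/(((p.1-r.1 : ℤ)):ℝ)^2 else 0) ≤ 4 := by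
  classical
  rw [← Finset.sum_filter]
  set S' := (S.erase r).filter (fun p => p.1+p.2 = r.1+r.2) with hS'
  have hinj : ∀ p ∈ S', ∀ q ∈ S', p.1 - r.1 = q.1 - r.1 → p = q := by
    intro p hp q hq h
    have h1 : p.1 = q.1 := by omega
    simp only [hS', Finset.mem_filter] at hp hq
    have : p.2 = q.2 := by omega
    exact Prod.ext h1 this
  have himg : ∑ p ∈ S', (1:ℝ)/(((p.1-r.1 : ℤ)):ℝ)^2
      = ∑ d ∈ S'.image (fun p => p.1 - r.1), (1:ℝ)/((d:ℤ):ℝ)^2 := by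
    rw [Finset.sum_image hinj]
  rw [himg]
  apply sum_inv_sq_int
  intro d hd
  simp only [Finset.mem_image] at hd
  obtain ⟨p, hp, rfl⟩ := hd
  simp only [hS', Finset.mem_filter, Finset.mem_erase] at hp
  have hne : p ≠ r := hp.1.1
  intro h0
  apply hne
  have h1 : p.1 = r.1 := by omega
  have h2 : p.2 = r.2 := by
    have := hp.2
    omega
  exact Prod.ext h1 h2
set_option maxHeartbeats 2000000 in
/-- Bilinear Strichartz estimate for frequency-separated free Schrödinger waves on the
rescaled torus `𝕋_λ = ℝ/(2πλℤ)`, on the long time interval `[0, λ/N]`. -/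
theorem bilinear_strichartz_long_time :
    ∃ C : ℝ, 0 < C ∧
      ∀ (lam M N : ℝ), 1 ≤ lam → 1 ≤ M → 1 ≤ N →
      ∀ (I₁ I₂ : Set ℝ), I₁.OrdConnected → I₂.OrdConnected →
        I₁ ⊆ Set.Icc (-10 * M) (10 * M) → I₂ ⊆ Set.Icc (-10 * M) (10 * M) →
        (∀ κ₁ ∈ I₁, ∀ κ₂ ∈ I₂, M ≤ |κ₁ - κ₂|) →
      ∀ (a₁ a₂ : ℤ →₀ ℂ),
        (∀ n : ℤ, (n : ℝ) / lam ∉ I₁ → a₁ n = 0) →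
        (∀ n : ℤ, (n : ℝ) / lam ∉ I₂ → a₂ n = 0) →
      ∀ (u₁ u₂ : ℝ → ℝ → ℂ),
        (∀ t x : ℝ, u₁ t x = ∑ n ∈ a₁.support, a₁ n *
          Complex.exp (Complex.I *
            ((n : ℂ) * (x : ℂ) / (lam : ℂ) - (n : ℂ) ^ 2 * (t : ℂ) / (lam : ℂ) ^ 2))) →
        (∀ t x : ℝ, u₂ t x = ∑ n ∈ a₂.support, a₂ n *
          Complex.exp (Complex.I *
            ((n : ℂ) * (x : ℂ) / (lam : ℂ) - (n : ℂ) ^ 2 * (t : ℂ) / (lam : ℂ) ^ 2))) →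
        (∫ t in (0:ℝ)..(lam / N), ∫ x in (0:ℝ)..(2 * π * lam),
            ‖u₁ t x * u₂ t x‖ ^ 2) ≤
          C * (1 / M + 1 / N)
            * (∫ x in (0:ℝ)..(2 * π * lam), ‖u₁ 0 x‖ ^ 2)
            * (∫ x in (0:ℝ)..(2 * π * lam), ‖u₂ 0 x‖ ^ 2) := by
  classical
  refine ⟨9, by norm_num, ?_⟩
  intro lam M N hlam hM hN I₁ I₂ _ _ _ _ hsep a₁ a₂ hsup1 hsup2 u₁ u₂ hu₁ hu₂
  have hlam0 : (0:ℝ) < lam := by linarith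
  have hM0 : (0:ℝ) < M := by linarith
  have hN0 : (0:ℝ) < N := by linarith
  have hπ : (0:ℝ) < π := Real.pi_pos
  set T : ℝ := lam / N with hTdef
  set s : ℝ := lam / (2*M) with hsdef
  have hT : 0 ≤ T := by positivity
  have hs : 0 < s := by positivity
  set P : Finset (ℤ×ℤ) := a₁.support ×ˢ a₂.support with hP
  set A : ℤ×ℤ → ℂ := fun p => a₁ p.1 * a₂ p.2 with hA
  set kf : ℤ×ℤ → ℤ := fun p => p.1 + p.2 with hkf
  set ω : ℤ×ℤ → ℝ := fun p => ((p.1^2 + p.2^2 : ℤ) : ℝ)/lam^2 with homega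
  set X : ℤ×ℤ → ℤ×ℤ → ℂ :=
    fun p q => if kf p = kf q then ((2*π*lam:ℝ):ℂ) else 0 with hX
  set Bij : ℤ×ℤ → ℤ×ℤ → ℝ :=
    fun p q => if q.1+q.2 = p.1+p.2 then (1:ℝ)/(((q.1-p.1 : ℤ)):ℝ)^2 else 0 with hBij
  -- product expansion
  have hprod : ∀ t x : ℝ, u₁ t x * u₂ t x
      = ∑ p ∈ P, (A p * Tfn (-(ω p)) t) * Efn lam (kf p) x := by
    intro t x
    rw [hu₁, hu₂, Finset.sum_mul_sum, hP, ← Finset.sum_product']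
    apply Finset.sum_congr rfl
    intro p _
    simp only [hA, hkf, homega, Tfn, Efn]
    rw [show ∀ (c₁ c₂ e₁ e₂ : ℂ), c₁ * e₁ * (c₂ * e₂) = (c₁*c₂) * (e₁*e₂) from
      fun _ _ _ _ => by ring, ← Complex.exp_add]
    conv_rhs => rw [mul_assoc, ← Complex.exp_add]
    congr 2
    push_cast
    ring
  -- initial data L² identities
  have h0 : ∀ (a : ℤ →₀ ℂ) (u : ℝ → ℝ → ℂ),
      (∀ t x : ℝ, u t x = ∑ n ∈ a.support, a n *
          Complex.exp (Complex.I *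
            ((n : ℂ) * (x : ℂ) / (lam : ℂ) - (n : ℂ) ^ 2 * (t : ℂ) / (lam : ℂ) ^ 2))) →
      (∫ x in (0:ℝ)..(2*π*lam), ‖u 0 x‖^2)
        = 2*π*lam * ∑ n ∈ a.support, ‖a n‖^2 := by
    intro a u hu
    have hbody : ∀ x : ℝ, u 0 x = ∑ n ∈ a.support, a n * Efn lam n x := by
      intro x
      rw [hu]
      apply Finset.sum_congr rfl
      intro n _
      congr 1
      unfold Efn
      congr 1
      push_cast
      ring
    have hcast : ((∫ x in (0:ℝ)..(2*π*lam), ‖u 0 x‖^2 : ℝ) : ℂ)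
        = ((2*π*lam * ∑ n ∈ a.support, ‖a n‖^2 : ℝ) : ℂ) := by
      have e1 : (∫ x in (0:ℝ)..(2*π*lam), ‖u 0 x‖^2 : ℝ)
          = ∫ x in (0:ℝ)..(2*π*lam), ‖∑ n ∈ a.support, a n * Efn lam n x‖^2 :=
        intervalIntegral.integral_congr (fun x _ => by rw [hbody x])
      rw [e1, x_expand lam hlam0 a.support a (fun n => n)]
      have e2 : ∀ n ∈ a.support, ∑ m ∈ a.support,
          a n * (starRingEnd ℂ) (a m) * (if n = m then ((2*π*lam:ℝ):ℂ) else 0)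
          = ((‖a n‖^2 * (2*π*lam) : ℝ) : ℂ) := by
        intro n hn
        rw [Finset.sum_eq_single n]
        · rw [if_pos rfl, Complex.mul_conj, Complex.normSq_eq_norm_sq]
          push_cast
          ring
        · intro m _ hm
          rw [if_neg (fun h => hm h.symm), mul_zero]
        · intro h
          exact absurd hn h
      rw [Finset.sum_congr rfl e2]
      rw [← Complex.ofReal_sum]
      congr 1
      rw [Finset.mul_sum]
      apply Finset.sum_congr rfl
      intro n _
      ring
    exact_mod_cast hcast
  -- fixed-time L² identity
  have key1 : ∀ t : ℝ, ((∫ x in (0:ℝ)..(2*π*lam), ‖u₁ t x * u₂ t x‖^2 : ℝ) : ℂ)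
      = ∑ p ∈ P, ∑ q ∈ P, (A p * (starRingEnd ℂ) (A q) * X p q) * Tfn (ω q - ω p) t := by
    intro t
    have e1 : (∫ x in (0:ℝ)..(2*π*lam), ‖u₁ t x * u₂ t x‖^2 : ℝ)
        = ∫ x in (0:ℝ)..(2*π*lam), ‖∑ p ∈ P, (A p * Tfn (-(ω p)) t) * Efn lam (kf p) x‖^2 :=
      intervalIntegral.integral_congr (fun x _ => by rw [hprod t x])
    rw [e1, x_expand lam hlam0 P (fun p => A p * Tfn (-(ω p)) t) kf]
    apply Finset.sum_congr rfl
    intro p _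
    apply Finset.sum_congr rfl
    intro q _
    rw [hX]
    simp only
    rw [map_mul, conj_Tfn, neg_neg]
    rw [show A p * Tfn (-ω p) t * ((starRingEnd ℂ) (A q) * Tfn (ω q) t)
        = (A p * (starRingEnd ℂ) (A q)) * (Tfn (-ω p) t * Tfn (ω q) t) by ring,
      Tfn_mul, show -ω p + ω q = ω q - ω p by ring]
    ring
  set g : ℝ → ℝ := fun t => ∫ x in (0:ℝ)..(2*π*lam), ‖u₁ t x * u₂ t x‖^2 with hg
  have hgnonneg : ∀ t, 0 ≤ g t := by
    intro t
    apply intervalIntegral.integral_nonneg (by positivity)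
    intro x _
    positivity
  have hgre : ∀ t, g t = (∑ p ∈ P, ∑ q ∈ P,
      (A p * (starRingEnd ℂ) (A q) * X p q) * Tfn (ω q - ω p) t).re := by
    intro t
    rw [← key1 t]
    exact (Complex.ofReal_re _).symm
  have hgcont : Continuous g := by
    have : g = fun t => (∑ p ∈ P, ∑ q ∈ P,
        (A p * (starRingEnd ℂ) (A q) * X p q) * Tfn (ω q - ω p) t).re := funext hgre
    rw [this]
    apply Complex.continuous_re.comp
    apply continuous_finset_sum
    intro p _
    apply continuous_finset_sum
    intro q _
    exact continuous_const.mul (Tfn_cont _)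
  -- pass to weighted time integral
  have hwle : (∫ t in (0:ℝ)..T, g t) ≤ ∫ t in (-s)..(T+s), wfn T s t * g t := by
    have hwg_cont : Continuous (fun t => wfn T s t * g t) := (wfn_cont T s).mul hgcont
    have e0 : (∫ t in (0:ℝ)..T, g t) = ∫ t in (0:ℝ)..T, wfn T s t * g t := by
      apply intervalIntegral.integral_congr
      intro t ht
      rw [Set.uIcc_of_le hT] at ht
      simp only
      rw [wfn_one T s t hs ht.1 ht.2, one_mul]
    have hsplit : (∫ t in (-s)..(T+s), wfn T s t * g t)
        = (∫ t in (-s)..(0:ℝ), wfn T s t * g t) + (∫ t in (0:ℝ)..T, wfn T s t * g t)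
          + ∫ t in T..(T+s), wfn T s t * g t := by
      rw [intervalIntegral.integral_add_adjacent_intervals
          (hwg_cont.intervalIntegrable _ _) (hwg_cont.intervalIntegrable _ _),
        intervalIntegral.integral_add_adjacent_intervals
          (hwg_cont.intervalIntegrable _ _) (hwg_cont.intervalIntegrable _ _)]
    have h1 : 0 ≤ ∫ t in (-s)..(0:ℝ), wfn T s t * g t :=
      intervalIntegral.integral_nonneg (by linarith)
        (fun t _ => mul_nonneg (wfn_nonneg T s t) (hgnonneg t))
    have h2 : 0 ≤ ∫ t in T..(T+s), wfn T s t * g t :=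
      intervalIntegral.integral_nonneg (by linarith)
        (fun t _ => mul_nonneg (wfn_nonneg T s t) (hgnonneg t))
    rw [e0, hsplit]
    linarith
  -- expansion of weighted integral
  have hwexp : ((∫ t in (-s)..(T+s), wfn T s t * g t : ℝ) : ℂ)
      = ∑ p ∈ P, ∑ q ∈ P, (A p * (starRingEnd ℂ) (A q) * X p q) * Wint T s (ω q - ω p) := by
    have hint : ∀ (p : ℤ×ℤ), IntervalIntegrable
        (fun t => ∑ q ∈ P, (A p * (starRingEnd ℂ) (A q) * X p q)
          * ((wfn T s t : ℂ) * Tfn (ω q - ω p) t)) volume (-s) (T+s) := by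
      intro p
      apply Continuous.intervalIntegrable
      apply continuous_finset_sum
      intro q _
      exact continuous_const.mul
        ((Complex.continuous_ofReal.comp (wfn_cont T s)).mul (Tfn_cont _))
    calc ((∫ t in (-s)..(T+s), wfn T s t * g t : ℝ) : ℂ)
        = ∫ t in (-s)..(T+s), ((wfn T s t * g t : ℝ) : ℂ) :=
          (intervalIntegral.integral_ofReal).symm
      _ = ∫ t in (-s)..(T+s), ∑ p ∈ P, ∑ q ∈ P,
            (A p * (starRingEnd ℂ) (A q) * X p q) * ((wfn T s t : ℂ) * Tfn (ω q - ω p) t) := by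
          apply intervalIntegral.integral_congr
          intro t _
          simp only
          rw [Complex.ofReal_mul, key1 t, Finset.mul_sum]
          apply Finset.sum_congr rfl
          intro p _
          rw [Finset.mul_sum]
          apply Finset.sum_congr rfl
          intro q _
          ring
      _ = ∑ p ∈ P, ∫ t in (-s)..(T+s), ∑ q ∈ P,
            (A p * (starRingEnd ℂ) (A q) * X p q) * ((wfn T s t : ℂ) * Tfn (ω q - ω p) t) :=
          intervalIntegral.integral_finset_sum (fun p _ => hint p)
      _ = ∑ p ∈ P, ∑ q ∈ P, ∫ t in (-s)..(T+s),
            (A p * (starRingEnd ℂ) (A q) * X p q) * ((wfn T s t : ℂ) * Tfn (ω q - ω p) t) := by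
          apply Finset.sum_congr rfl
          intro p _
          exact intervalIntegral.integral_finset_sum (fun q _ =>
            (continuous_const.mul
              ((Complex.continuous_ofReal.comp (wfn_cont T s)).mul (Tfn_cont _))).intervalIntegrable _ _)
      _ = ∑ p ∈ P, ∑ q ∈ P, (A p * (starRingEnd ℂ) (A q) * X p q) * Wint T s (ω q - ω p) := by
          apply Finset.sum_congr rfl
          intro p _
          apply Finset.sum_congr rfl
          intro q _
          rw [intervalIntegral.integral_const_mul]
          rfl
  -- term bounds
  have hdiag : ∀ p ∈ P, ‖(A p * (starRingEnd ℂ) (A p) * X p p) * Wint T s (ω p - ω p)‖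
      ≤ ‖A p‖^2 * (2*π*lam*(T+2*s)) := by
    intro p _
    rw [norm_mul, norm_mul, norm_mul, RCLike.norm_conj]
    have hXpp : ‖X p p‖ = 2*π*lam := by
      rw [hX]
      simp only
      simp only [if_true]
      rw [Complex.norm_real, Real.norm_eq_abs, abs_of_pos (by positivity)]
    rw [hXpp]
    calc ‖A p‖ * ‖A p‖ * (2*π*lam) * ‖Wint T s (ω p - ω p)‖
        ≤ ‖A p‖ * ‖A p‖ * (2*π*lam) * (T + 2*s) := by
          apply mul_le_mul_of_nonneg_left (Wint_bound_zero T s hT hs _) (by positivity)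
      _ = ‖A p‖^2 * (2*π*lam*(T+2*s)) := by ring
  have hoff : ∀ p ∈ P, ∀ q ∈ P.erase p,
      ‖(A p * (starRingEnd ℂ) (A q) * X p q) * Wint T s (ω q - ω p)‖
      ≤ (‖A p‖^2 + ‖A q‖^2)/2 * (2*π*lam*(2*lam/M)) * Bij p q := by
    intro p hp q hq
    rw [Finset.mem_erase] at hq
    have hqP := hq.2
    have hqp : q ≠ p := hq.1
    by_cases hk : kf p = kf q
    case neg =>
      have hXz : X p q = 0 := by rw [hX]; simp only [if_neg hk]
      have hBz : Bij p q = 0 := by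
        rw [hBij]
        simp only
        rw [if_neg (by rw [hkf] at hk; simp only at hk; omega)]
      rw [hXz, hBz]
      simp
    case pos =>
      have hkk : p.1 + p.2 = q.1 + q.2 := by rw [hkf] at hk; simpa using hk
      set d : ℤ := q.1 - p.1 with hd
      have hdne : d ≠ 0 := by
        intro h
        apply hqp
        have h1 : q.1 = p.1 := by omega
        have h2 : q.2 = p.2 := by omega
        exact Prod.ext h1 h2
      have hBv : Bij p q = (1:ℝ)/((d:ℤ):ℝ)^2 := by
        rw [hBij]
        simp only
        rw [if_pos (by omega)]
      have hXv : ‖X p q‖ = 2*π*lam := by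
        rw [hX]
        simp only
        rw [if_pos hk, Complex.norm_real, Real.norm_eq_abs, abs_of_pos (by positivity)]
      -- separation
      have hq1 : (q.1:ℝ)/lam ∈ I₁ := by
        by_contra hc
        have := hsup1 q.1 hc
        rw [hP, Finset.mem_product] at hqP
        exact absurd this (Finsupp.mem_support_iff.mp hqP.1)
      have hp2 : (p.2:ℝ)/lam ∈ I₂ := by
        by_contra hc
        have := hsup2 p.2 hc
        rw [hP, Finset.mem_product] at hp
        exact absurd this (Finsupp.mem_support_iff.mp hp.2)
      have hsep' : M ≤ |(q.1:ℝ)/lam - (p.2:ℝ)/lam| := hsep _ hq1 _ hp2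
      have habs : M * lam ≤ |((q.1 - p.2 : ℤ):ℝ)| := by
        have e : (q.1:ℝ)/lam - (p.2:ℝ)/lam = ((q.1 - p.2 : ℤ):ℝ)/lam := by
          push_cast
          field_simp
        rw [e, abs_div, abs_of_pos hlam0, le_div_iff₀ hlam0] at hsep'
        linarith
      -- frequency gap
      set θ : ℝ := ω q - ω p with hθ
      have hθeq : θ = ((2*d*(q.1 - p.2) : ℤ):ℝ)/lam^2 := by
        rw [hθ, homega]
        simp only
        rw [div_sub_div_same]
        congr 1
        have h2 : q.2 = p.1 + p.2 - q.1 := by omega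
        rw [hd]
        push_cast [h2]
        ring
      have hdabs : (1:ℝ) ≤ |((d:ℤ):ℝ)| := by
        rw [← Int.cast_abs]
        exact_mod_cast Int.one_le_abs hdne
      have hθabs : 2*M*|((d:ℤ):ℝ)|/lam ≤ |θ| := by
        rw [hθeq, abs_div, abs_of_pos (by positivity : (0:ℝ) < lam^2)]
        rw [div_le_div_iff₀ hlam0 (by positivity)]
        push_cast [abs_mul]
        calc 2*M*|((d:ℤ):ℝ)| * lam^2 = (2*|((d:ℤ):ℝ)|) * ((M*lam) * lam) := by ring
          _ ≤ (2*|((d:ℤ):ℝ)|) * (|((q.1:ℝ) - (p.2:ℝ))| * lam) := by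
              apply mul_le_mul_of_nonneg_left ?_ (by positivity)
              apply mul_le_mul_of_nonneg_right ?_ hlam0.le
              calc M * lam ≤ |((q.1 - p.2 : ℤ):ℝ)| := habs
                _ = |((q.1:ℝ) - (p.2:ℝ))| := by push_cast; ring_nf
          _ = |2| * |((d:ℤ):ℝ)| * |((q.1:ℝ) - (p.2:ℝ))| * lam := by
              rw [abs_of_nonneg (by norm_num : (0:ℝ) ≤ 2)]
              ring
      have hθpos : (0:ℝ) < 2*M*|((d:ℤ):ℝ)|/lam := by positivity
      have hθne : θ ≠ 0 := by
        intro h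
        rw [h, abs_zero] at hθabs
        linarith
      have hW : ‖Wint T s θ‖ ≤ (2*lam/M) * ((1:ℝ)/((d:ℤ):ℝ)^2) := by
        refine (Wint_bound_ne T s hT hs θ hθne).trans ?_
        have hθsq : (2*M*|((d:ℤ):ℝ)|/lam)^2 ≤ θ^2 := by
          rw [← sq_abs θ]
          exact pow_le_pow_left₀ hθpos.le hθabs 2
        calc 4/(s*θ^2) ≤ 4/(s*(2*M*|((d:ℤ):ℝ)|/lam)^2) := by
              apply div_le_div_of_nonneg_left (by norm_num) (by positivity) ?_
              exact mul_le_mul_of_nonneg_left hθsq hs.le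
          _ = (2*lam/M) * ((1:ℝ)/((d:ℤ):ℝ)^2) := by
              rw [hsdef]
              rw [div_pow, mul_pow, mul_pow, sq_abs]
              field_simp
              ring
      rw [norm_mul, norm_mul, norm_mul, RCLike.norm_conj, hXv, hBv]
      have hab : ‖A p‖ * ‖A q‖ ≤ (‖A p‖^2 + ‖A q‖^2)/2 := by
        nlinarith [sq_nonneg (‖A p‖ - ‖A q‖)]
      calc ‖A p‖ * ‖A q‖ * (2*π*lam) * ‖Wint T s (ω q - ω p)‖
          ≤ ‖A p‖ * ‖A q‖ * (2*π*lam) * ((2*lam/M) * ((1:ℝ)/((d:ℤ):ℝ)^2)) := by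
            apply mul_le_mul_of_nonneg_left hW (by positivity)
        _ = (‖A p‖ * ‖A q‖) * ((2*π*lam) * ((2*lam/M) * ((1:ℝ)/((d:ℤ):ℝ)^2))) := by ring
        _ ≤ (‖A p‖^2 + ‖A q‖^2)/2 * ((2*π*lam) * ((2*lam/M) * ((1:ℝ)/((d:ℤ):ℝ)^2))) := by
            apply mul_le_mul_of_nonneg_right hab (by positivity)
        _ = (‖A p‖^2 + ‖A q‖^2)/2 * (2*π*lam*(2*lam/M)) * ((1:ℝ)/((d:ℤ):ℝ)^2) := by ring
  -- row sums
  have hrow1 : ∀ p ∈ P, ∑ q ∈ P.erase p, Bij p q ≤ 4 := by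
    intro p _
    exact row_sum_le P p
  have hrow2 : ∀ q ∈ P, ∑ p ∈ P.erase q, Bij p q ≤ 4 := by
    intro q _
    have : ∀ p ∈ P.erase q, Bij p q
        = (if p.1+p.2 = q.1+q.2 then (1:ℝ)/(((p.1-q.1 : ℤ)):ℝ)^2 else 0) := by
      intro p _
      rw [hBij]
      simp only
      congr 1
      · rw [eq_iff_iff]; omega
      · congr 1
        push_cast
        ring
    rw [Finset.sum_congr rfl this]
    exact row_sum_le P q
  set SA1 : ℝ := ∑ n ∈ a₁.support, ‖a₁ n‖^2 with hSA1
  set SA2 : ℝ := ∑ n ∈ a₂.support, ‖a₂ n‖^2 with hSA2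
  have hSA1n : 0 ≤ SA1 := Finset.sum_nonneg fun n _ => by positivity
  have hSA2n : 0 ≤ SA2 := Finset.sum_nonneg fun n _ => by positivity
  have hSAprod : ∑ p ∈ P, ‖A p‖^2 = SA1 * SA2 := by
    have e1 : ∀ p ∈ P, ‖A p‖^2 = ‖a₁ p.1‖^2 * ‖a₂ p.2‖^2 := by
      intro p _
      rw [hA]
      simp only
      rw [norm_mul, mul_pow]
    rw [Finset.sum_congr rfl e1, hSA1, hSA2, Finset.sum_mul_sum, hP,
      ← Finset.sum_product']
  -- main estimate on the double sum of norms
  have hsum : ∑ p ∈ P, ∑ q ∈ P,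
        ‖(A p * (starRingEnd ℂ) (A q) * X p q) * Wint T s (ω q - ω p)‖
      ≤ 2*π*lam*(T+2*s) * (SA1*SA2) + 2*π*lam*(8*lam/M) * (SA1*SA2) := by
    set tn : ℤ×ℤ → ℤ×ℤ → ℝ := fun p q =>
      ‖(A p * (starRingEnd ℂ) (A q) * X p q) * Wint T s (ω q - ω p)‖ with htn
    have hsplit : ∑ p ∈ P, ∑ q ∈ P, tn p q
        = ∑ p ∈ P, tn p p + ∑ p ∈ P, ∑ q ∈ P.erase p, tn p q := by
      rw [← Finset.sum_add_distrib]
      apply Finset.sum_congr rfl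
      intro p hp
      exact (Finset.add_sum_erase P (tn p) hp).symm
    rw [hsplit]
    have hpartA : ∑ p ∈ P, tn p p ≤ 2*π*lam*(T+2*s) * (SA1*SA2) := by
      calc ∑ p ∈ P, tn p p ≤ ∑ p ∈ P, ‖A p‖^2 * (2*π*lam*(T+2*s)) :=
            Finset.sum_le_sum (fun p hp => hdiag p hp)
        _ = 2*π*lam*(T+2*s) * (SA1*SA2) := by
            rw [← Finset.sum_mul, hSAprod]
            ring
    have hpartB : ∑ p ∈ P, ∑ q ∈ P.erase p, tn p q
        ≤ 2*π*lam*(8*lam/M) * (SA1*SA2) := by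
      set c2 : ℝ := 2*π*lam*(2*lam/M) with hc2
      have hc2n : 0 ≤ c2 := by rw [hc2]; positivity
      have hstep : ∑ p ∈ P, ∑ q ∈ P.erase p, tn p q
          ≤ ∑ p ∈ P, ∑ q ∈ P.erase p,
              (‖A p‖^2/2 * c2 * Bij p q + ‖A q‖^2/2 * c2 * Bij p q) :=
        Finset.sum_le_sum (fun p hp => Finset.sum_le_sum (fun q hq =>
          le_trans (hoff p hp q hq) (le_of_eq (by rw [hc2]; ring))))
      refine hstep.trans ?_
      rw [show (fun p => ∑ q ∈ P.erase p,
          (‖A p‖^2/2 * c2 * Bij p q + ‖A q‖^2/2 * c2 * Bij p q)) = fun p =>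
          ((∑ q ∈ P.erase p, ‖A p‖^2/2 * c2 * Bij p q)
            + ∑ q ∈ P.erase p, ‖A q‖^2/2 * c2 * Bij p q) from
        funext (fun p => Finset.sum_add_distrib), Finset.sum_add_distrib]
      have hBijnn : ∀ p q : ℤ×ℤ, 0 ≤ Bij p q := by
        intro p q
        rw [hBij]
        simp only
        split <;> positivity
      have hU1 : ∑ p ∈ P, ∑ q ∈ P.erase p, ‖A p‖^2/2 * c2 * Bij p q
          ≤ 2*c2*(SA1*SA2) := by
        calc ∑ p ∈ P, ∑ q ∈ P.erase p, ‖A p‖^2/2 * c2 * Bij p q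
            = ∑ p ∈ P, (‖A p‖^2/2 * c2) * ∑ q ∈ P.erase p, Bij p q := by
              apply Finset.sum_congr rfl
              intro p _
              rw [Finset.mul_sum]
          _ ≤ ∑ p ∈ P, (‖A p‖^2/2 * c2) * 4 := by
              apply Finset.sum_le_sum
              intro p hp
              exact mul_le_mul_of_nonneg_left (hrow1 p hp) (by positivity)
          _ = 2*c2*(SA1*SA2) := by
              rw [show (fun p => ‖A p‖^2/2 * c2 * 4) = fun p => ‖A p‖^2 * (2*c2) from
                funext (fun p => by ring), ← Finset.sum_mul, hSAprod]
              ring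
      have hswap : ∑ p ∈ P, ∑ q ∈ P.erase p, ‖A q‖^2/2 * c2 * Bij p q
          = ∑ q ∈ P, ∑ p ∈ P.erase q, ‖A q‖^2/2 * c2 * Bij p q := by
        apply Finset.sum_comm'
        intro p q
        simp only [Finset.mem_erase]
        constructor
        · rintro ⟨h1, h2, h3⟩
          exact ⟨⟨fun h => h2 h.symm, h1⟩, h3⟩
        · rintro ⟨⟨h1, h2⟩, h3⟩
          exact ⟨h2, fun h => h1 h.symm, h3⟩
      have hU2 : ∑ p ∈ P, ∑ q ∈ P.erase p, ‖A q‖^2/2 * c2 * Bij p q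
          ≤ 2*c2*(SA1*SA2) := by
        rw [hswap]
        calc ∑ q ∈ P, ∑ p ∈ P.erase q, ‖A q‖^2/2 * c2 * Bij p q
            = ∑ q ∈ P, (‖A q‖^2/2 * c2) * ∑ p ∈ P.erase q, Bij p q := by
              apply Finset.sum_congr rfl
              intro q _
              rw [Finset.mul_sum]
          _ ≤ ∑ q ∈ P, (‖A q‖^2/2 * c2) * 4 := by
              apply Finset.sum_le_sum
              intro q hq
              exact mul_le_mul_of_nonneg_left (hrow2 q hq) (by positivity)
          _ = 2*c2*(SA1*SA2) := by
              rw [show (fun q => ‖A q‖^2/2 * c2 * 4) = fun q => ‖A q‖^2 * (2*c2) from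
                funext (fun q => by ring), ← Finset.sum_mul, hSAprod]
              ring
      calc _ ≤ 2*c2*(SA1*SA2) + 2*c2*(SA1*SA2) := add_le_add hU1 hU2
        _ = 2*π*lam*(8*lam/M) * (SA1*SA2) := by rw [hc2]; ring
    exact add_le_add hpartA hpartB
  -- put everything together
  have hre : (∫ t in (-s)..(T+s), wfn T s t * g t)
      ≤ 2*π*lam*(T+2*s) * (SA1*SA2) + 2*π*lam*(8*lam/M) * (SA1*SA2) := by
    have h1 : (∫ t in (-s)..(T+s), wfn T s t * g t)
        = (((∫ t in (-s)..(T+s), wfn T s t * g t : ℝ) : ℂ)).re := by simp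
    rw [h1, hwexp]
    refine le_trans (Complex.re_le_norm _) ?_
    refine le_trans (norm_sum_le _ _) ?_
    refine le_trans (Finset.sum_le_sum (fun p _ => norm_sum_le _ _)) ?_
    exact hsum
  have hLHS : (∫ t in (0:ℝ)..(lam/N), ∫ x in (0:ℝ)..(2 * π * lam),
      ‖u₁ t x * u₂ t x‖ ^ 2) = ∫ t in (0:ℝ)..T, g t := by rfl
  rw [hLHS, h0 a₁ u₁ hu₁, h0 a₂ u₂ hu₂]
  refine le_trans hwle (le_trans hre ?_)
  -- final arithmetic
  have hgoal : 2*π*lam*(T+2*s) * (SA1*SA2) + 2*π*lam*(8*lam/M) * (SA1*SA2)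
      ≤ 9 * (1/M + 1/N) * (2*π*lam * SA1) * (2*π*lam * SA2) := by
    have hZ : 0 ≤ SA1 * SA2 := mul_nonneg hSA1n hSA2n
    have e1 : 2*π*lam*(T+2*s) * (SA1*SA2) + 2*π*lam*(8*lam/M) * (SA1*SA2)
        = (2*π*lam^2*(1/N + 9/M)) * (SA1*SA2) := by
      rw [hTdef, hsdef]
      field_simp
      ring
    have e2 : 9 * (1/M + 1/N) * (2*π*lam * SA1) * (2*π*lam * SA2)
        = (9*(1/M+1/N)*(4*π^2*lam^2)) * (SA1*SA2) := by ring
    rw [e1, e2]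
    apply mul_le_mul_of_nonneg_right ?_ hZ
    have h1 : 1/N + 9/M ≤ 9*(1/M+1/N) := by
      have ha : (0:ℝ) < 1/N := by positivity
      have hb : 9*(1/M+1/N) - (1/N + 9/M) = 8*(1/N) := by ring
      linarith
    have h2 : 2*π ≤ 4*π^2 := by nlinarith [pi_gt_three]
    calc 2*π*lam^2*(1/N + 9/M) ≤ 2*π*lam^2*(9*(1/M+1/N)) :=
          mul_le_mul_of_nonneg_left h1 (by positivity)
      _ = (9*(1/M+1/N)*lam^2) * (2*π) := by ring
      _ ≤ (9*(1/M+1/N)*lam^2) * (4*π^2) :=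
          mul_le_mul_of_nonneg_left h2 (by positivity)
      _ = 9*(1/M+1/N)*(4*π^2*lam^2) := by ring
  calc _ ≤ _ := hgoal
    _ = 9 * (1 / M + 1 / N) * (2 * π * lam * SA1) * (2 * π * lam * SA2) := by ring
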